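/- arXiv:2410.07595 — 2 statements merged into one kernel-verified Lean document; each statement's English description precedes it below -/
import Mathlib

section
/- For 0 ≤ r ≤ m−1, the codes RM(r,m) and RM(m−r−1,m) are dual to each other with respect to the standard bilinear form on F_2^{Z_2^m}: RM(r,m)^⊥ = RM(m−r−1, m). In particular, for any J, K ⊆ [m] with |J| ≥ m−r and |K| ≥ r+1 and any y, one has Σ_x 1_{⟨J⟩}(x)·1_{y+⟨K⟩}(x) = 0 in F_2. -/
open Finset
open scoped Classical

/-- The standard subcube `⟨J⟩ ⊆ Z_2^m`: bit strings supported on `J`. -/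
def cube {m : ℕ} (J : Finset (Fin m)) : Set (Fin m → ZMod 2) :=
  {v | ∀ i, i ∉ J → v i = 0}

/-- The subcube `x + ⟨J⟩ ⊆ Z_2^m`: bit strings agreeing with `x` off `J`. -/
def subcube {m : ℕ} (x : Fin m → ZMod 2) (J : Finset (Fin m)) : Set (Fin m → ZMod 2) :=
  {v | ∀ i, i ∉ J → v i = x i}

/-- The indicator bit string `e_I` of a subset `I ⊆ [m]`. -/
def eVec {m : ℕ} (I : Finset (Fin m)) : Fin m → ZMod 2 :=
  fun i => if i ∈ I then 1 else 0

/-- The `F₂`-valued indicator function of a set of bit strings. -/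
noncomputable def indF2 {m : ℕ} (A : Set (Fin m → ZMod 2)) (w : Fin m → ZMod 2) : ZMod 2 :=
  if w ∈ A then 1 else 0

/-- The Reed–Muller code `RM(r,m)`, as the span of the indicator functions of
standard subcubes of dimension at least `m - r`. -/
noncomputable def RMcode (m r : ℕ) : Submodule (ZMod 2) ((Fin m → ZMod 2) → ZMod 2) :=
  Submodule.span (ZMod 2)
    {f | ∃ J : Finset (Fin m), m - r ≤ J.card ∧ f = indF2 (cube J)}

namespace RMaux

lemma ind_congr {m : ℕ} {A : Set (Fin m → ZMod 2)} {w : Fin m → ZMod 2} {q : Prop}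
    [Decidable q] (h : w ∈ A ↔ q) : indF2 A w = if q then 1 else 0 := by
  by_cases hq : q
  · simp only [indF2]; rw [if_pos (h.2 hq), if_pos hq]
  · simp only [indF2]; rw [if_neg (fun hw => hq (h.1 hw)), if_neg hq]

lemma ind_congr' {m : ℕ} {A : Set (Fin m → ZMod 2)} {w w' : Fin m → ZMod 2}
    (h : w ∈ A ↔ w' ∈ A) : indF2 A w = indF2 A w' := by
  simp only [indF2]; exact if_congr h rfl rfl

lemma z2 (a : ZMod 2) : a = 0 ∨ a = 1 := by revert a; decide

lemma add_self (a : ZMod 2) : a + a = 0 := by revert a; decide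

def supp {m : ℕ} (x : Fin m → ZMod 2) : Finset (Fin m) :=
  Finset.univ.filter (fun i => x i = 1)

variable {m : ℕ}

lemma mem_supp {x : Fin m → ZMod 2} {i : Fin m} : i ∈ supp x ↔ x i = 1 := by
  simp [supp]

lemma notMem_supp {x : Fin m → ZMod 2} {i : Fin m} : i ∉ supp x ↔ x i = 0 := by
  rw [mem_supp]
  rcases z2 (x i) with h | h <;> simp [h]

lemma supp_inj {x y : Fin m → ZMod 2} (h : supp x = supp y) : x = y := by
  funext i
  rcases z2 (x i) with hx | hx
  · have : i ∉ supp y := h ▸ notMem_supp.2 hx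
    rw [hx, notMem_supp.1 this]
  · have : i ∈ supp y := h ▸ mem_supp.2 hx
    rw [hx, mem_supp.1 this]

lemma indF2_cube (J : Finset (Fin m)) (w : Fin m → ZMod 2) :
    indF2 (cube J) w = if supp w ⊆ J then 1 else 0 := by
  have : w ∈ cube J ↔ supp w ⊆ J := by
    constructor
    · intro h i hi
      by_contra hiJ
      have h0 := h i hiJ
      rw [mem_supp.1 hi] at h0
      exact one_ne_zero h0
    · intro h i hi
      exact notMem_supp.1 (fun hc => hi (h hc))
  exact ind_congr this

lemma card_le_m (J : Finset (Fin m)) : J.card ≤ m := by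
  simpa using Finset.card_le_univ J

/-- key part-2 lemma -/
lemma orth_pair (r : ℕ) (J K : Finset (Fin m)) (y : Fin m → ZMod 2)
    (hJ : m - r ≤ J.card) (hK : r + 1 ≤ K.card) :
    ∑ x : Fin m → ZMod 2, indF2 (cube J) x * indF2 (subcube y K) x = 0 := by
  obtain ⟨i₀, hiJ, hiK⟩ : ∃ i, i ∈ J ∧ i ∈ K := by
    by_contra h
    push_neg at h
    have hd : Disjoint J K := Finset.disjoint_left.2 h
    have := Finset.card_union_of_disjoint hd
    have h2 := card_le_m (J ∪ K)
    omega
  apply Finset.sum_ninvolution (fun x => Function.update x i₀ (x i₀ + 1))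
  · intro x
    have h1 : indF2 (cube J) (Function.update x i₀ (x i₀ + 1)) = indF2 (cube J) x := by
      have : Function.update x i₀ (x i₀ + 1) ∈ cube J ↔ x ∈ cube J := by
        constructor <;> intro h i hi <;> have hne : i ≠ i₀ := fun e => hi (e ▸ hiJ)
        · have := h i hi; rwa [Function.update_of_ne hne] at this
        · rw [Function.update_of_ne hne]; exact h i hi
      exact ind_congr' this
    have h2 : indF2 (subcube y K) (Function.update x i₀ (x i₀ + 1)) = indF2 (subcube y K) x := by
      have : Function.update x i₀ (x i₀ + 1) ∈ subcube y K ↔ x ∈ subcube y K := by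
        constructor <;> intro h i hi <;> have hne : i ≠ i₀ := fun e => hi (e ▸ hiK)
        · have := h i hi; rwa [Function.update_of_ne hne] at this
        · rw [Function.update_of_ne hne]; exact h i hi
      exact ind_congr' this
    rw [h1, h2]; exact add_self _
  · intro x _ h
    have := congrFun h i₀
    simp only [Function.update_self] at this
    have : (1 : ZMod 2) = 0 := by
      have := add_right_cancel (a := (1:ZMod 2)) (b := x i₀) (c := 0) ?_
      · exact this
      · rw [zero_add]; rw [add_comm] at this; exact this
    exact one_ne_zero this
  · intro x; exact Finset.mem_univ _
  · intro x
    funext i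
    by_cases hi : i = i₀
    · subst hi; simp [Function.update_self, add_self, add_assoc]
    · simp [Function.update_of_ne hi]

lemma ite_prop_congr {p q : Prop} [Decidable p] [Decidable q] (h : p ↔ q) :
    (if p then (1 : ZMod 2) else 0) = if q then 1 else 0 := by
  by_cases hp : p
  · rw [if_pos hp, if_pos (h.1 hp)]
  · rw [if_neg hp, if_neg (fun hq => hp (h.2 hq))]

lemma two_pow (n : ℕ) : ((2 ^ n : ℕ) : ZMod 2) = if n = 0 then 1 else 0 := by
  cases n with
  | zero => simp
  | succ k =>
    have h2 : ((2 : ℕ) : ZMod 2) = 0 := by decide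
    rw [pow_succ, Nat.cast_mul, h2, mul_zero, if_neg (Nat.succ_ne_zero k)]

lemma interval_sum (x w : Fin m → ZMod 2) :
    ∑ J : Finset (Fin m),
      (if J ⊆ supp x then (1 : ZMod 2) else 0) * (if supp w ⊆ J then 1 else 0)
      = if x = w then 1 else 0 := by
  have h1 : ∀ J : Finset (Fin m),
      (if J ⊆ supp x then (1 : ZMod 2) else 0) * (if supp w ⊆ J then 1 else 0)
      = if J ∈ Finset.Icc (supp w) (supp x) then 1 else 0 := by
    intro J
    by_cases hA : J ⊆ supp x <;> by_cases hB : supp w ⊆ J <;>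
      simp [Finset.mem_Icc, hA, hB, Finset.le_iff_subset]
  rw [Finset.sum_congr rfl fun J _ => h1 J, Finset.sum_ite_mem, Finset.univ_inter,
    Finset.sum_const, nsmul_eq_mul, mul_one]
  by_cases hxw : x = w
  · subst hxw
    rw [if_pos rfl, Finset.card_Icc_finset (Finset.Subset.refl _)]
    simp
  · rw [if_neg hxw]
    by_cases hsub : supp w ⊆ supp x
    · have hne : supp w ≠ supp x := fun h => hxw (supp_inj h).symm
      have hlt : (supp w).card < (supp x).card :=
        Finset.card_lt_card (HasSubset.Subset.ssubset_of_ne hsub hne)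
      rw [Finset.card_Icc_finset hsub, two_pow, if_neg (by omega)]
    · rw [Finset.Icc_eq_empty (fun h => hsub h)]
      simp

lemma mono_sum (J : Finset (Fin m)) (x : Fin m → ZMod 2) :
    (if J ⊆ supp x then (1 : ZMod 2) else 0) = ∑ T ∈ J.powerset, indF2 (cube Tᶜ) x := by
  have h1 : ∑ T ∈ J.powerset, indF2 (cube Tᶜ) x
      = ∑ T ∈ J.powerset, (if T ∈ (J \ supp x).powerset then (1 : ZMod 2) else 0) := by
    refine Finset.sum_congr rfl fun T hT => ?_
    rw [indF2_cube]
    refine ite_prop_congr ?_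
    rw [Finset.mem_powerset, Finset.subset_sdiff]
    constructor
    · intro h
      refine ⟨Finset.mem_powerset.1 hT, Finset.disjoint_left.2 fun i hiT hiS => ?_⟩
      exact (Finset.mem_compl.1 (h hiS)) hiT
    · rintro ⟨-, hd⟩ i hi
      exact Finset.mem_compl.2 (Finset.disjoint_right.1 hd hi)
  rw [h1, Finset.sum_ite_mem,
    Finset.inter_eq_right.2 (Finset.powerset_mono.2 Finset.sdiff_subset),
    Finset.sum_const, nsmul_eq_mul, mul_one, Finset.card_powerset, two_pow]
  refine ite_prop_congr ?_
  rw [Finset.card_eq_zero, Finset.sdiff_eq_empty_iff_subset]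

lemma expand (u : (Fin m → ZMod 2) → ZMod 2) :
    u = ∑ J : Finset (Fin m),
      (∑ x : Fin m → ZMod 2, u x * if J ⊆ supp x then 1 else 0) • indF2 (cube J) := by
  funext w
  rw [Finset.sum_apply]
  simp only [Pi.smul_apply, smul_eq_mul, indF2_cube]
  symm
  calc
    ∑ J : Finset (Fin m),
        (∑ x : Fin m → ZMod 2, u x * if J ⊆ supp x then (1 : ZMod 2) else 0) *
          (if supp w ⊆ J then 1 else 0)
      = ∑ J : Finset (Fin m), ∑ x : Fin m → ZMod 2,
          u x * ((if J ⊆ supp x then (1 : ZMod 2) else 0) * (if supp w ⊆ J then 1 else 0)) := by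
        refine Finset.sum_congr rfl fun J _ => ?_
        rw [Finset.sum_mul]
        exact Finset.sum_congr rfl fun x _ => by ring
    _ = ∑ x : Fin m → ZMod 2, ∑ J : Finset (Fin m),
          u x * ((if J ⊆ supp x then (1 : ZMod 2) else 0) * (if supp w ⊆ J then 1 else 0)) :=
        Finset.sum_comm
    _ = ∑ x : Fin m → ZMod 2, u x * (if x = w then 1 else 0) := by
        refine Finset.sum_congr rfl fun x _ => ?_
        rw [← Finset.mul_sum, interval_sum]
    _ = u w := by
        simp only [mul_ite, mul_one, mul_zero]
        rw [Finset.sum_ite_eq' Finset.univ w u, if_pos (Finset.mem_univ w)]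

lemma orth_span {S : Set ((Fin m → ZMod 2) → ZMod 2)} {u : (Fin m → ZMod 2) → ZMod 2}
    (h : ∀ g ∈ S, ∑ x : Fin m → ZMod 2, u x * g x = 0) :
    ∀ v ∈ Submodule.span (ZMod 2) S, ∑ x : Fin m → ZMod 2, u x * v x = 0 := by
  intro v hv
  induction hv using Submodule.span_induction with
  | mem g hg => exact h g hg
  | zero => simp
  | add a b _ _ ha hb =>
    simp only [Pi.add_apply, mul_add, Finset.sum_add_distrib, ha, hb, add_zero]
  | smul c a _ ha =>
    have : ∀ x, u x * (c • a) x = c * (u x * a x) := fun x => by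
      simp only [Pi.smul_apply, smul_eq_mul]; ring
    rw [Finset.sum_congr rfl fun x _ => this x, ← Finset.mul_sum, ha, mul_zero]

lemma orth_span_left {S : Set ((Fin m → ZMod 2) → ZMod 2)} {v : (Fin m → ZMod 2) → ZMod 2}
    (h : ∀ g ∈ S, ∑ x : Fin m → ZMod 2, g x * v x = 0) :
    ∀ u ∈ Submodule.span (ZMod 2) S, ∑ x : Fin m → ZMod 2, u x * v x = 0 := by
  intro u hu
  induction hu using Submodule.span_induction with
  | mem g hg => exact h g hg
  | zero => simp
  | add a b _ _ ha hb =>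
    simp only [Pi.add_apply, add_mul, Finset.sum_add_distrib, ha, hb, add_zero]
  | smul c a _ ha =>
    have : ∀ x, (c • a) x * v x = c * (a x * v x) := fun x => by
      simp only [Pi.smul_apply, smul_eq_mul]; ring
    rw [Finset.sum_congr rfl fun x _ => this x, ← Finset.mul_sum, ha, mul_zero]

end RMaux

/-- `RM(r,m)^⊥ = RM(m-r-1,m)` under the standard dot product, and in
particular the indicator of `⟨J⟩` (`|J| ≥ m-r`) is orthogonal to the indicator of
any coset `y + ⟨K⟩` (`|K| ≥ r+1`). -/
theorem RM_dual (m r : ℕ) (hr : r + 1 ≤ m) :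
    ({u | ∀ v ∈ RMcode m r, ∑ x : Fin m → ZMod 2, u x * v x = 0}
        = (RMcode m (m - r - 1) : Set ((Fin m → ZMod 2) → ZMod 2))) ∧
    (∀ (J K : Finset (Fin m)) (y : Fin m → ZMod 2),
      m - r ≤ J.card → r + 1 ≤ K.card →
      ∑ x : Fin m → ZMod 2, indF2 (cube J) x * indF2 (subcube y K) x = 0) := by
  refine ⟨?_, fun J K y hJ hK => RMaux.orth_pair r J K y hJ hK⟩
  ext u
  simp only [Set.mem_setOf_eq, SetLike.mem_coe]
  constructor
  · intro hu
    rw [RMaux.expand u]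
    refine Submodule.sum_mem _ fun J _ => ?_
    by_cases hcard : r + 1 ≤ J.card
    · exact Submodule.smul_mem _ _ (Submodule.subset_span ⟨J, by omega, rfl⟩)
    · have hfun : (fun x => if J ⊆ RMaux.supp x then (1 : ZMod 2) else 0)
          = ∑ T ∈ J.powerset, indF2 (cube Tᶜ) := by
        funext x
        rw [RMaux.mono_sum J x, Finset.sum_apply]
      have hmem : (fun x => if J ⊆ RMaux.supp x then (1 : ZMod 2) else 0) ∈ RMcode m r := by
        rw [hfun]
        refine Submodule.sum_mem _ fun T hT => ?_
        refine Submodule.subset_span ⟨Tᶜ, ?_, rfl⟩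
        have h1 : T.card ≤ J.card := Finset.card_le_card (Finset.mem_powerset.1 hT)
        have h2 : Tᶜ.card = m - T.card := by
          rw [Finset.card_compl, Fintype.card_fin]
        omega
      have hcoef : (∑ x : Fin m → ZMod 2, u x * if J ⊆ RMaux.supp x then 1 else 0) = 0 := by
        simpa using hu _ hmem
      rw [hcoef, zero_smul]
      exact Submodule.zero_mem _
  · intro hu v hv
    refine RMaux.orth_span ?_ v hv
    rintro g ⟨J, hJ, rfl⟩
    refine RMaux.orth_span_left ?_ u hu
    rintro g' ⟨K, hK, rfl⟩
    have hK' : r + 1 ≤ K.card := by omega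
    have h0 := RMaux.orth_pair r J K 0 hJ hK'
    have hsub : cube K = subcube (0 : Fin m → ZMod 2) K := rfl
    calc ∑ x : Fin m → ZMod 2, indF2 (cube K) x * indF2 (cube J) x
        = ∑ x : Fin m → ZMod 2, indF2 (cube J) x * indF2 (subcube 0 K) x := by
          refine Finset.sum_congr rfl fun x _ => ?_
          rw [mul_comm, hsub]
      _ = 0 := h0
end

section
/- (Union of minimal covers of dense subsets equals partial minimal covers) Fix 0 ≤ q < r, Q = {J ⊆ [m] : q+1 ≤ |J| ≤ r}, Q_k = {K : q+kr+1 ≤ |K| ≤ (k+1)r}. Let J ∈ Q, K ∈ Q_k with J ⊆ K. Define D_J(K) = {K' ⊆ K : K' ∈ Q_{k−1}, K = K' ∪ J}, and for a set L let F(L) denote its collection of minimal covers (subcollections J' ⊆ Q with union L and exactly the minimal number |J'| of elements, namely k for L ∈ Q_{k−1}). Define F(K)_{∼J} = {J \ {J} : J ∈ F(K), J ∈ J}, the partial minimal covers of K relative to J. Then ∪_{K' ∈ D_J(K)} F(K') = F(K)_{∼J}. -/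
open Finset

/-- the union over dense subsets `K' ∈ D_J(K)` of the collections
of minimal covers `F(K')` equals the collection `F(K)_{∼J}` of partial minimal
covers of `K` relative to `J`. -/
theorem union_min_covers_eq_partial (m q r k : ℕ) (hqr : q < r) (hk : 1 ≤ k)
    (J K : Finset (Fin m))
    (hJ : q + 1 ≤ J.card ∧ J.card ≤ r)
    (hK : q + k * r + 1 ≤ K.card ∧ K.card ≤ (k + 1) * r)
    (hJK : J ⊆ K) :
    {𝒥' : Finset (Finset (Fin m)) | ∃ K' : Finset (Fin m),
        K' ⊆ K ∧ (q + (k - 1) * r + 1 ≤ K'.card ∧ K'.card ≤ k * r) ∧ K' ∪ J = K ∧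
        ((∀ J' ∈ 𝒥', q + 1 ≤ J'.card ∧ J'.card ≤ r) ∧ 𝒥'.sup id = K' ∧ 𝒥'.card = k)}
      = {𝒥' : Finset (Finset (Fin m)) | ∃ 𝒥 : Finset (Finset (Fin m)),
        ((∀ J' ∈ 𝒥, q + 1 ≤ J'.card ∧ J'.card ≤ r) ∧ 𝒥.sup id = K ∧ 𝒥.card = k + 1) ∧
        J ∈ 𝒥 ∧ 𝒥' = 𝒥.erase J} := by
  ext 𝒥'
  simp only [Set.mem_setOf_eq]
  constructor
  · rintro ⟨K', hK'K, ⟨hlo, hhi⟩, hunion, hcards, hsup, hcard⟩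
    have hJnot : J ∉ 𝒥' := by
      intro hJmem
      have hJsub : J ⊆ K' := by
        have := Finset.le_sup (f := id) hJmem
        simpa [hsup] using this
      have : K' = K := by
        rw [← hunion, Finset.union_eq_left.mpr hJsub]
      have h1 : q + k * r + 1 ≤ K'.card := this ▸ hK.1
      have h2 : k * r < q + k * r + 1 := by omega
      omega
    refine ⟨insert J 𝒥', ⟨?_, ?_, ?_⟩, Finset.mem_insert_self _ _, ?_⟩
    · intro J' hJ'
      rcases Finset.mem_insert.mp hJ' with h | h
      · exact h ▸ hJ
      · exact hcards J' h
    · rw [Finset.sup_insert, hsup]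
      simpa [Finset.union_comm] using hunion
    · rw [Finset.card_insert_of_notMem hJnot, hcard]
    · rw [Finset.erase_insert hJnot]
  · rintro ⟨𝒥, ⟨hcards, hsup, hcard⟩, hJmem, rfl⟩
    set K' := (𝒥.erase J).sup id with hK'def
    have hins : insert J (𝒥.erase J) = 𝒥 := Finset.insert_erase hJmem
    have hKeq : K' ∪ J = K := by
      rw [← hsup, ← hins, Finset.sup_insert]
      simp [Finset.union_comm, hK'def]
    have hK'K : K' ⊆ K := by rw [← hKeq]; exact Finset.subset_union_left
    have hcardE : (𝒥.erase J).card = k := by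
      rw [Finset.card_erase_of_mem hJmem, hcard]; omega
    have hhi : K'.card ≤ k * r := by
      calc K'.card ≤ ∑ J' ∈ 𝒥.erase J, J'.card := by
            rw [hK'def, Finset.sup_eq_biUnion]
            exact Finset.card_biUnion_le
        _ ≤ (𝒥.erase J).card * r := by
            apply Finset.sum_le_card_nsmul
            intro J' hJ'
            exact (hcards J' (Finset.mem_of_mem_erase hJ')).2
        _ = k * r := by rw [hcardE]
    have hlo : q + (k - 1) * r + 1 ≤ K'.card := by
      have h1 : K.card ≤ K'.card + J.card := by
        rw [← hKeq]; exact Finset.card_union_le _ _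
      have h2 : J.card ≤ r := hJ.2
      have h3 : k * r = (k - 1) * r + r := by
        cases k with
        | zero => omega
        | succ n => simp [Nat.succ_sub_one, Nat.succ_mul]
      omega
    refine ⟨K', hK'K, ⟨hlo, hhi⟩, hKeq, ?_, rfl, hcardE⟩
    intro J' hJ'
    exact hcards J' (Finset.mem_of_mem_erase hJ')
end
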